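/- arXiv:2104.03353 — 6 statements merged into one kernel-verified Lean document; each statement's English description precedes it below -/
import Mathlib

section
/- Let K_X and K_Y be finite sets of keys, let g be an injective function from keys into a linearly ordered type, and let n be a natural number. Let L_X = bottom_n(K_X), L_Y = bottom_n(K_Y), and m = |L_X ∩ L_Y|. Then L_X ∩ L_Y = bottom_m(K_X ∩ K_Y); that is, the intersection of the two bottom-n sets consists exactly of the m elements of K_X ∩ K_Y with the smallest g-values. -/
/-- `bottomN g n S` is the subset of `S` consisting of the `n` elements of `S`
with the smallest `g`-values (or all of `S` if `|S| ≤ n`): an element `x ∈ S`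
is kept iff fewer than `n` elements of `S` have strictly smaller `g`-value. -/
def bottomN {α β : Type*} [DecidableEq α] [LinearOrder β] (g : α → β) (n : ℕ)
    (S : Finset α) : Finset α :=
  S.filter (fun x => (S.filter (fun y => g y < g x)).card < n)

/-- The intersection of the bottom-`n` sets of `K_X` and `K_Y` (under an injective
hash `g`) consists exactly of the `m` elements of `K_X ∩ K_Y` with the smallest
`g`-values, where `m` is the size of that intersection. -/
theorem bottomN_inter_eq_bottomN_card {α β : Type*} [DecidableEq α] [LinearOrder β]
    (g : α → β) (hg : Function.Injective g) (n : ℕ) (KX KY : Finset α) :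
    bottomN g n KX ∩ bottomN g n KY
      = bottomN g ((bottomN g n KX ∩ bottomN g n KY).card) (KX ∩ KY) := by
  set L := bottomN g n KX ∩ bottomN g n KY with hL
  have hmemX : ∀ x ∈ L, x ∈ bottomN g n KX := fun x hx => (Finset.mem_inter.1 hx).1
  have hmemY : ∀ x ∈ L, x ∈ bottomN g n KY := fun x hx => (Finset.mem_inter.1 hx).2
  -- L is a subset of KX ∩ KY
  have hLT : L ⊆ KX ∩ KY := by
    intro x hx
    exact Finset.mem_inter.2 ⟨(Finset.mem_filter.1 (hmemX x hx)).1,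
      (Finset.mem_filter.1 (hmemY x hx)).1⟩
  -- downward closedness of bottomN
  have hdcb : ∀ (S : Finset α) (x : α), x ∈ bottomN g n S → ∀ y ∈ S, g y < g x →
      y ∈ bottomN g n S := by
    intro S x hx y hyS hlt
    obtain ⟨hxS, hxcard⟩ := Finset.mem_filter.1 hx
    refine Finset.mem_filter.2 ⟨hyS, lt_of_le_of_lt ?_ hxcard⟩
    exact Finset.card_le_card (fun z hz => by
      obtain ⟨hzS, hzlt⟩ := Finset.mem_filter.1 hz
      exact Finset.mem_filter.2 ⟨hzS, hzlt.trans hlt⟩)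
  have hdc : ∀ x ∈ L, ∀ y ∈ KX ∩ KY, g y < g x → y ∈ L := by
    intro x hx y hy hlt
    obtain ⟨hyX, hyY⟩ := Finset.mem_inter.1 hy
    exact Finset.mem_inter.2 ⟨hdcb KX x (hmemX x hx) y hyX hlt,
      hdcb KY x (hmemY x hx) y hyY hlt⟩
  -- now show L = bottomN g L.card (KX ∩ KY) by ext
  ext x
  simp only [bottomN, Finset.mem_filter]
  constructor
  · intro hx
    refine ⟨hLT hx, ?_⟩
    have hsub : (KX ∩ KY).filter (fun y => g y < g x) ⊆ L.erase x := by
      intro y hy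
      obtain ⟨hyT, hylt⟩ := Finset.mem_filter.1 hy
      refine Finset.mem_erase.2 ⟨?_, hdc x hx y hyT hylt⟩
      rintro rfl; exact lt_irrefl _ hylt
    calc ((KX ∩ KY).filter (fun y => g y < g x)).card ≤ (L.erase x).card :=
          Finset.card_le_card hsub
      _ < L.card := Finset.card_erase_lt_of_mem hx
  · rintro ⟨hxT, hxcard⟩
    by_contra hxL
    have hsub : L ⊆ (KX ∩ KY).filter (fun y => g y < g x) := by
      intro z hz
      refine Finset.mem_filter.2 ⟨hLT hz, ?_⟩
      rcases lt_trichotomy (g z) (g x) with h | h | h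
      · exact h
      · exact absurd (hg h) (by rintro rfl; exact hxL hz)
      · exact absurd (hdc z hz x hxT h) hxL
    exact absurd (Finset.card_le_card hsub) (not_le.2 hxcard)
end

section
/- Let K_X and K_Y be finite sets of keys, let g be an injective function from keys into a linearly ordered type, and let n be a natural number. Then bottom_n(K_X) ∩ bottom_n(K_Y) ⊆ bottom_n(K_X ∩ K_Y); that is, every key that lies in both bottom-n sets is among the n elements of K_X ∩ K_Y with the smallest g-values. -/
/-- Every key lying in both bottom-`n` sets is among the `n` elements of
`K_X ∩ K_Y` with the smallest `g`-values. -/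
theorem bottomN_inter_subset_bottomN {α β : Type*} [DecidableEq α] [LinearOrder β]
    (g : α → β) (hg : Function.Injective g) (n : ℕ) (KX KY : Finset α) :
    bottomN g n KX ∩ bottomN g n KY ⊆ bottomN g n (KX ∩ KY) := by
  intro x hx
  simp only [bottomN, Finset.mem_inter, Finset.mem_filter] at hx ⊢
  obtain ⟨⟨hxX, hcX⟩, hxY, _⟩ := hx
  refine ⟨⟨hxX, hxY⟩, lt_of_le_of_lt ?_ hcX⟩
  exact Finset.card_le_card (Finset.filter_subset_filter _ (Finset.inter_subset_left))
end

section
/- Let K_X and K_Y be finite sets of keys with union U, and let σ be a uniformly random linear order on U (equivalently, a uniformly random bijection from U to {1,…,|U|}). Fix n, and let L_X and L_Y be the sets of n σ-smallest elements of K_X and of K_Y respectively. Then for any two subsets T₁, T₂ ⊆ K_X ∩ K_Y with |T₁| = |T₂|, the probability that L_X ∩ L_Y = T₁ equals the probability that L_X ∩ L_Y = T₂. Consequently, conditioned on its size, the key set of the joined sketch is a uniform random subset of K_X ∩ K_Y. -/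
open Finset

theorem bottomN_map {α α' β : Type*} [DecidableEq α] [DecidableEq α'] [LinearOrder β]
    (f : α ↪ α') (g : α' → β) (n : ℕ) (S : Finset α) :
    bottomN g n (S.map f) = (bottomN (g ∘ f) n S).map f := by
  simp only [bottomN, filter_map, card_map, Function.comp_apply]

theorem Equiv.Perm.exists_map_finset_eq_of_subset {α : Type*} [DecidableEq α]
    {s t u : Finset α} (hs : s ⊆ u) (ht : t ⊆ u) (h : #s = #t) :
    ∃ π : Perm α, {a | π a ≠ a} ⊆ u ∧ s.map π.toEmbedding = t := by
  have hcard : #(s.subtype (· ∈ u)) = #(t.subtype (· ∈ u)) := by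
    rwa [card_subtype, card_subtype, filter_true_of_mem hs, filter_true_of_mem ht]
  obtain ⟨τ, hτ⟩ := exists_map_finset_eq _ _ hcard
  refine ⟨ofSubtype τ, fun a ha => by_contra fun hau => ha (ofSubtype_apply_of_not_mem τ hau), ?_⟩
  have hcomm : (Function.Embedding.subtype (· ∈ u)).trans (ofSubtype τ).toEmbedding =
      τ.toEmbedding.trans (Function.Embedding.subtype _) :=
    Function.Embedding.ext (ofSubtype_apply_coe τ)
  rw [← subtype_map_of_mem hs, map_map, hcomm, ← map_map, hτ, subtype_map_of_mem ht]

section JoinedSketch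

variable {α β : Type*} [DecidableEq α] [LinearOrder β]

def joinedSketch (g : α → β) (n : ℕ) (KX KY : Finset α) : Finset α :=
  bottomN g n KX ∩ bottomN g n KY

theorem map_joinedSketch_comp_perm (π : Equiv.Perm α) {KX KY : Finset α}
    (hX : KX.map π.toEmbedding = KX) (hY : KY.map π.toEmbedding = KY) (g : α → β) (n : ℕ) :
    (joinedSketch (g ∘ π) n KX KY).map π.toEmbedding = joinedSketch g n KX KY := by
  rw [joinedSketch, joinedSketch, map_inter, ← Equiv.coe_toEmbedding π, ← bottomN_map,
    ← bottomN_map, hX, hY]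

theorem card_joinedSketch_eq_of_perm [Fintype (α ≃ β)] (π : Equiv.Perm α) {KX KY : Finset α}
    (hX : KX.map π.toEmbedding = KX) (hY : KY.map π.toEmbedding = KY) (n : ℕ)
    {T₁ T₂ : Finset α} (hT : T₁.map π.toEmbedding = T₂) :
    #{σ : α ≃ β | joinedSketch σ n KX KY = T₁} = #{σ : α ≃ β | joinedSketch σ n KX KY = T₂} := by
  refine card_equiv (π.equivCongr (Equiv.refl β)) fun σ => ?_
  have hσ : ⇑σ = ⇑(π.equivCongr (Equiv.refl β) σ) ∘ π := by ext; simp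
  simp only [mem_filter, mem_univ, true_and]
  rw [← map_joinedSketch_comp_perm π hX hY (π.equivCongr (Equiv.refl β) σ), ← hσ, ← hT, map_inj]

end JoinedSketch

theorem joined_sketch_keys_uniform_general {α : Type*} [Fintype α] [DecidableEq α]
    (KX KY : Finset α) (n : ℕ)
    (T₁ T₂ : Finset α) (hT₁ : T₁ ⊆ KX ∩ KY) (hT₂ : T₂ ⊆ KX ∩ KY)
    (hcard : T₁.card = T₂.card) :
    ((Finset.univ.filter
        (fun σ : α ≃ Fin (Fintype.card α) =>
          bottomN (⇑σ) n KX ∩ bottomN (⇑σ) n KY = T₁)).card : ℝ)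
      / (Fintype.card (α ≃ Fin (Fintype.card α)) : ℝ)
    = ((Finset.univ.filter
        (fun σ : α ≃ Fin (Fintype.card α) =>
          bottomN (⇑σ) n KX ∩ bottomN (⇑σ) n KY = T₂)).card : ℝ)
      / (Fintype.card (α ≃ Fin (Fintype.card α)) : ℝ) := by
  obtain ⟨π, hπ, hT⟩ := Equiv.Perm.exists_map_finset_eq_of_subset hT₁ hT₂ hcard
  have hfix {K : Finset α} (hK : KX ∩ KY ⊆ K) : K.map π.toEmbedding = K :=
    map_perm (hπ.trans (coe_subset.mpr hK))
  have hcount := card_joinedSketch_eq_of_perm (β := Fin (Fintype.card α)) π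
    (hfix inter_subset_left) (hfix inter_subset_right) n hT
  exact congrArg (fun k : ℕ => (k : ℝ) / _) hcount

/-- Let `K_X` and `K_Y` be finite key sets whose union `U` is the whole (finite)
ambient type, and let `σ` be a uniformly random bijection from `U` onto
`Fin |U|` (i.e., a uniformly random linear order on `U`).  Let `L_X` and `L_Y`
be the sets of the `n` σ-smallest elements of `K_X` and `K_Y`.  Then for any
two subsets `T₁, T₂ ⊆ K_X ∩ K_Y` of equal cardinality, the probability that
`L_X ∩ L_Y = T₁` equals the probability that `L_X ∩ L_Y = T₂`. -/
theorem joined_sketch_keys_uniform {α : Type*} [Fintype α] [DecidableEq α]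
    (KX KY : Finset α) (hU : KX ∪ KY = Finset.univ) (n : ℕ)
    (T₁ T₂ : Finset α) (hT₁ : T₁ ⊆ KX ∩ KY) (hT₂ : T₂ ⊆ KX ∩ KY)
    (hcard : T₁.card = T₂.card) :
    ((Finset.univ.filter
        (fun σ : α ≃ Fin (Fintype.card α) =>
          bottomN (⇑σ) n KX ∩ bottomN (⇑σ) n KY = T₁)).card : ℝ)
      / (Fintype.card (α ≃ Fin (Fintype.card α)) : ℝ)
    = ((Finset.univ.filter
        (fun σ : α ≃ Fin (Fintype.card α) =>
          bottomN (⇑σ) n KX ∩ bottomN (⇑σ) n KY = T₂)).card : ℝ)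
      / (Fintype.card (α ≃ Fin (Fintype.card α)) : ℝ) :=
  joined_sketch_keys_uniform_general KX KY n T₁ T₂ hT₁ hT₂ hcard
end

section
/- Let μ_A, μ_B, ν_A, ν_B, ν_{A,B} be real numbers with ν_A − μ_A² > 0 and ν_B − μ_B² > 0, and define ρ = (ν_{A,B} − μ_A·μ_B) / (√(ν_A − μ_A²)·√(ν_B − μ_B²)). Suppose real bounds satisfy 0 ≤ μ_A^low ≤ μ_A ≤ μ_A^high, 0 ≤ μ_B^low ≤ μ_B ≤ μ_B^high, ν_A^low ≤ ν_A ≤ ν_A^high, ν_B^low ≤ ν_B ≤ ν_B^high, and ν_{A,B}^low ≤ ν_{A,B} ≤ ν_{A,B}^high. Define num_low = ν_{A,B}^low − μ_A^high·μ_B^high, num_high = ν_{A,B}^high − μ_A^low·μ_B^low, den_low = √( max(0, ν_A^low − (μ_A^high)²) · max(0, ν_B^low − (μ_B^high)²) ), den_high = √( max(0, ν_A^high − (μ_A^low)²) · max(0, ν_B^high − (μ_B^low)²) ), and assume den_low > 0. Define ρ^low = num_low/den_high if num_low ≥ 0 and ρ^low = num_low/den_low if num_low < 0; define ρ^high = num_high/den_low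 if num_high ≥ 0 and ρ^high = num_high/den_high if num_high < 0. Then ρ^low ≤ ρ ≤ ρ^high. -/
open scoped Classical


lemma div_sandwich_aux (n nl nh d dl dh : ℝ) (hd : 0 < d) (hdl : 0 < dl)
    (h1 : dl ≤ d) (h2 : d ≤ dh) (hn1 : nl ≤ n) (hn2 : n ≤ nh) :
    (if 0 ≤ nl then nl / dh else nl / dl) ≤ n / d ∧
      n / d ≤ (if 0 ≤ nh then nh / dl else nh / dh) := by
  have hdh : 0 < dh := lt_of_lt_of_le hd h2
  constructor
  · split_ifs with h
    · rw [div_le_div_iff₀ hdh hd]; nlinarith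
    · rw [div_le_div_iff₀ hdl hd]; nlinarith
  · split_ifs with h
    · rw [div_le_div_iff₀ hd hdl]; nlinarith
    · rw [div_le_div_iff₀ hd hdh]; nlinarith

/-- Deterministic confidence interval for Pearson's correlation
`ρ = (ν_{A,B} − μ_A·μ_B)/(√(ν_A − μ_A²)·√(ν_B − μ_B²))`: interval bounds on the
five parameters `μ_A, μ_B, ν_A, ν_B, ν_{A,B}` (with nonnegative lower bounds for
the means, and `den_low > 0`) yield `ρ^low ≤ ρ ≤ ρ^high` with the paper's case
analysis on the signs of `num_low` and `num_high`. -/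
theorem correlation_interval_sandwich
    (μA μB νA νB νAB : ℝ)
    (μAlow μAhigh μBlow μBhigh νAlow νAhigh νBlow νBhigh νABlow νABhigh : ℝ)
    (hvarA : 0 < νA - μA ^ 2) (hvarB : 0 < νB - μB ^ 2)
    (hμA0 : 0 ≤ μAlow) (hμA1 : μAlow ≤ μA) (hμA2 : μA ≤ μAhigh)
    (hμB0 : 0 ≤ μBlow) (hμB1 : μBlow ≤ μB) (hμB2 : μB ≤ μBhigh)
    (hνA1 : νAlow ≤ νA) (hνA2 : νA ≤ νAhigh)
    (hνB1 : νBlow ≤ νB) (hνB2 : νB ≤ νBhigh)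
    (hνAB1 : νABlow ≤ νAB) (hνAB2 : νAB ≤ νABhigh) :
    let ρ := (νAB - μA * μB) / (Real.sqrt (νA - μA ^ 2) * Real.sqrt (νB - μB ^ 2))
    let numLow := νABlow - μAhigh * μBhigh
    let numHigh := νABhigh - μAlow * μBlow
    let denLow :=
      Real.sqrt (max 0 (νAlow - μAhigh ^ 2) * max 0 (νBlow - μBhigh ^ 2))
    let denHigh :=
      Real.sqrt (max 0 (νAhigh - μAlow ^ 2) * max 0 (νBhigh - μBlow ^ 2))
    let ρlow := if 0 ≤ numLow then numLow / denHigh else numLow / denLow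
    let ρhigh := if 0 ≤ numHigh then numHigh / denLow else numHigh / denHigh
    0 < denLow → ρlow ≤ ρ ∧ ρ ≤ ρhigh := by
  intro ρ numLow numHigh denLow denHigh ρlow ρhigh hdl
  have hμA : 0 ≤ μA := le_trans hμA0 hμA1
  have hμB : 0 ≤ μB := le_trans hμB0 hμB1
  have hA1 : max 0 (νAlow - μAhigh ^ 2) ≤ νA - μA ^ 2 := by
    apply max_le hvarA.le; nlinarith
  have hA2 : νA - μA ^ 2 ≤ max 0 (νAhigh - μAlow ^ 2) := by
    refine le_trans ?_ (le_max_right _ _); nlinarith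
  have hB1 : max 0 (νBlow - μBhigh ^ 2) ≤ νB - μB ^ 2 := by
    apply max_le hvarB.le; nlinarith
  have hB2 : νB - μB ^ 2 ≤ max 0 (νBhigh - μBlow ^ 2) := by
    refine le_trans ?_ (le_max_right _ _); nlinarith
  have hd : Real.sqrt (νA - μA ^ 2) * Real.sqrt (νB - μB ^ 2)
      = Real.sqrt ((νA - μA ^ 2) * (νB - μB ^ 2)) :=
    (Real.sqrt_mul hvarA.le _).symm
  have hdpos : 0 < Real.sqrt ((νA - μA ^ 2) * (νB - μB ^ 2)) :=
    Real.sqrt_pos.mpr (mul_pos hvarA hvarB)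
  have h1 : denLow ≤ Real.sqrt ((νA - μA ^ 2) * (νB - μB ^ 2)) := by
    apply Real.sqrt_le_sqrt
    exact mul_le_mul hA1 hB1 (le_max_left _ _) hvarA.le
  have h2 : Real.sqrt ((νA - μA ^ 2) * (νB - μB ^ 2)) ≤ denHigh := by
    apply Real.sqrt_le_sqrt
    exact mul_le_mul hA2 hB2 hvarB.le (le_trans hvarA.le hA2)
  have key := div_sandwich_aux (νAB - μA * μB) numLow numHigh
    (Real.sqrt ((νA - μA ^ 2) * (νB - μB ^ 2))) denLow denHigh hdpos hdl h1 h2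
    (by simp only [numLow]; nlinarith) (by simp only [numHigh]; nlinarith)
  simpa only [ρlow, ρhigh, ρ, hd] using key
end

section
/- Let (A_1, B_1), …, (A_N, B_N) be pairs of real numbers with 0 ≤ A_i ≤ C and 0 ≤ B_i ≤ C, C > 0, and define the population parameters μ_A = (1/N)·Σ A_i, μ_B = (1/N)·Σ B_i, ν_A = (1/N)·Σ A_i², ν_B = (1/N)·Σ B_i², ν_{A,B} = (1/N)·Σ A_i·B_i. Sample n pairs uniformly at random without replacement, yielding (a_1,b_1),…,(a_n,b_n), and define the sample analogues μ_a, μ_b, ν_a, ν_b, ν_{a,b}. Let 0 < α < 1, t = √( ln(10/α)·C²/(2n) ), and t' = √( ln(10/α)·C⁴/(2n) ). Then with probability at least 1 − α, all five bounds hold simultaneously: |μ_A − μ_a| ≤ t, |μ_B − μ_b| ≤ t, |ν_A − ν_a| ≤ t', |ν_B − ν_b| ≤ t', and |ν_{A,B} − ν_{a,b}| ≤ t'. -/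
/-!
Hoeffding's bound for sampling without replacement, proved combinatorially. An `(r + 1)`-subset
of `S` is a first draw `i ∈ S` followed by an `r`-subset `I` of `S.erase i`; recentring `I` at the
mean of `S.erase i` splits the centred sum into `c * (x i - mean S)` plus the centred sum of `I`,
where `c = 1 - r / (#S - 1) ∈ [0, 1]`. Hoeffding's lemma for the uniform first draw and induction
on `r` bound the exponential moment over `r`-subsets by `exp (s² r (b - a)² / 8)`, exactly as for
independent draws. The Chernoff bound then makes each of the five deviations exceed its radius
with probability at most `2 exp (-2 n t² / (b - a)²) = α / 5`, and a union bound concludes.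
-/

open Finset Real ProbabilityTheory
open scoped BigOperators

theorem Fintype.expect_exp_mul_sub_expect_le {ι : Type*} [Fintype ι] (x : ι → ℝ) {a b : ℝ}
    (hx : ∀ i, x i ∈ Set.Icc a b) (u : ℝ) :
    𝔼 i, exp (u * (x i - 𝔼 j, x j)) ≤ exp (u ^ 2 * (b - a) ^ 2 / 8) := by
  cases isEmpty_or_nonempty ι
  · simp [exp_nonneg]
  let : MeasurableSpace ι := ⊤
  have hint (f : ι → ℝ) : ∫ i, f i ∂(PMF.uniformOfFintype ι).toMeasure = 𝔼 i, f i := by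
    simp [PMF.integral_eq_sum, PMF.uniformOfFintype_apply, expect_eq_sum_div_card, div_eq_inv_mul,
      mul_sum]
  have := (hasSubgaussianMGF_of_mem_Icc (μ := (PMF.uniformOfFintype ι).toMeasure)
    Measurable.of_discrete.aemeasurable (MeasureTheory.ae_of_all _ hx)).mgf_le u
  rw [mgf, hint, hint] at this
  refine this.trans_eq ?_
  congr 1
  push_cast [Real.norm_eq_abs, div_pow, sq_abs]
  ring

theorem Finset.expect_exp_mul_sub_expect_le {ι : Type*} (S : Finset ι) (x : ι → ℝ) {a b : ℝ}
    (hx : ∀ i ∈ S, x i ∈ Set.Icc a b) (u : ℝ) :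
    𝔼 i ∈ S, exp (u * (x i - 𝔼 j ∈ S, x j)) ≤ exp (u ^ 2 * (b - a) ^ 2 / 8) := by
  have := Fintype.expect_exp_mul_sub_expect_le (fun i : S ↦ x i) (fun i ↦ hx i i.2) u
  simpa only [expect_eq_sum_div_card, Fintype.card_coe, card_univ, sum_coe_sort S (x ·),
    sum_coe_sort S fun i ↦ exp (u * (x i - (∑ j ∈ S, x j) / #S))] using this

theorem Finset.sum_sum_powersetCard_erase_insert {ι M : Type*} [DecidableEq ι] [AddCommMonoid M]
    (S : Finset ι) (r : ℕ) (f : Finset ι → M) :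
    ∑ i ∈ S, ∑ I ∈ (S.erase i).powersetCard r, f (insert i I) =
      (r + 1) • ∑ I ∈ S.powersetCard (r + 1), f I := by
  calc ∑ i ∈ S, ∑ I ∈ (S.erase i).powersetCard r, f (insert i I)
      = ∑ i ∈ S, ∑ I ∈ S.powersetCard (r + 1) with i ∈ I, f I := by
        refine sum_congr rfl fun i hi ↦ sum_nbij' (insert i) (·.erase i) ?_ ?_ ?_ ?_ ?_ <;>
          intro I hI <;> simp only [mem_filter, mem_powersetCard] at hI ⊢ <;> grind
    _ = ∑ I ∈ S.powersetCard (r + 1), ∑ i ∈ I, f I :=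
        sum_comm' fun i I ↦ by simp only [mem_filter, mem_powersetCard]; grind
    _ = (r + 1) • ∑ I ∈ S.powersetCard (r + 1), f I := by
        rw [smul_sum]
        exact sum_congr rfl fun I hI ↦ by rw [sum_const, (mem_powersetCard.1 hI).2]

theorem Finset.sum_insert_sub_mul_expect_eq {ι : Type*} [DecidableEq ι] {S : Finset ι} {i : ι}
    (hi : i ∈ S) (x : ι → ℝ) {r : ℕ} {I : Finset ι} (hI : I ∈ (S.erase i).powersetCard r) :
    ∑ j ∈ insert i I, x j - (r + 1) * 𝔼 j ∈ S, x j =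
      (1 - r / ((#S : ℝ) - 1)) * (x i - 𝔼 j ∈ S, x j) +
        (∑ j ∈ I, x j - r * 𝔼 j ∈ S.erase i, x j) := by
  obtain ⟨hIS, rfl⟩ := mem_powersetCard.1 hI
  rw [sum_insert fun h ↦ by simpa using hIS h]
  rcases (#I).eq_zero_or_pos with hI0 | hI0
  · simp only [hI0, CharP.cast_eq_zero, zero_add, one_mul, zero_div, sub_zero, zero_mul]
    ring
  have hS : 2 ≤ #S := by
    have := card_le_card hIS
    rw [card_erase_of_mem hi] at this
    omega
  have hS1 : ((#S : ℝ) - 1) ≠ 0 := by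
    have : (2 : ℝ) ≤ #S := by exact_mod_cast hS
    linarith
  rw [expect_eq_sum_div_card, expect_eq_sum_div_card, sum_erase_eq_sub hi,
    card_erase_of_mem hi, Nat.cast_sub (by omega), Nat.cast_one]
  field_simp
  ring

theorem Finset.mul_sum_powersetCard_succ_exp_le {ι : Type*} [DecidableEq ι] {S : Finset ι}
    (x : ι → ℝ) {a b : ℝ} (hx : ∀ i ∈ S, x i ∈ Set.Icc a b) {r : ℕ} (hS : r + 1 ≤ #S) (s : ℝ)
    {K : ℝ} (hK : ∀ i ∈ S, ∑ I ∈ (S.erase i).powersetCard r,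
      exp (s * (∑ j ∈ I, x j - r * 𝔼 j ∈ S.erase i, x j)) ≤ K) :
    ((r + 1 : ℕ) : ℝ) * ∑ I ∈ S.powersetCard (r + 1),
        exp (s * (∑ i ∈ I, x i - (r + 1 : ℕ) * 𝔼 j ∈ S, x j)) ≤
      #S * K * exp (s ^ 2 * (b - a) ^ 2 / 8) := by
  set μ := 𝔼 j ∈ S, x j with hμ
  set c : ℝ := 1 - r / ((#S : ℝ) - 1) with hc
  have hsc : (s * c) ^ 2 * (b - a) ^ 2 / 8 ≤ s ^ 2 * (b - a) ^ 2 / 8 := by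
    have hr : (r : ℝ) + 1 ≤ #S := by exact_mod_cast hS
    have : r / ((#S : ℝ) - 1) ≤ 1 := div_le_one_of_le₀ (by linarith) (by linarith)
    have : 0 ≤ r / ((#S : ℝ) - 1) := div_nonneg (Nat.cast_nonneg r) (by linarith)
    have hc_sq : c ^ 2 ≤ 1 := by nlinarith
    rw [mul_pow]; gcongr; nlinarith [sq_nonneg s]
  have hK0 : 0 ≤ K := by
    obtain ⟨i, hi⟩ := card_pos.1 (by omega : 0 < #S)
    exact (sum_nonneg fun _ _ ↦ (exp_pos _).le).trans (hK i hi)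
  calc ((r + 1 : ℕ) : ℝ) * ∑ I ∈ S.powersetCard (r + 1),
        exp (s * (∑ i ∈ I, x i - (r + 1 : ℕ) * μ))
      = ∑ i ∈ S, ∑ I ∈ (S.erase i).powersetCard r,
          exp (s * (∑ j ∈ insert i I, x j - (r + 1 : ℕ) * μ)) := by
        rw [← nsmul_eq_mul]; exact (sum_sum_powersetCard_erase_insert S r _).symm
    _ = ∑ i ∈ S, exp (s * c * (x i - μ)) * ∑ I ∈ (S.erase i).powersetCard r,
          exp (s * (∑ j ∈ I, x j - r * 𝔼 j ∈ S.erase i, x j)) := by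
        refine sum_congr rfl fun i hi ↦ ?_
        rw [mul_sum]
        refine sum_congr rfl fun I hI ↦ ?_
        rw [← exp_add, Nat.cast_succ, sum_insert_sub_mul_expect_eq hi x hI, ← hμ, ← hc]
        ring_nf
    _ ≤ ∑ i ∈ S, exp (s * c * (x i - μ)) * K := by gcongr with i hi; exact hK i hi
    _ = K * (#S * 𝔼 i ∈ S, exp (s * c * (x i - μ))) := by
        rw [card_mul_expect, mul_sum]; exact sum_congr rfl fun _ _ ↦ mul_comm _ _
    _ ≤ K * (#S * exp ((s * c) ^ 2 * (b - a) ^ 2 / 8)) := by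
        gcongr; exact expect_exp_mul_sub_expect_le S x hx (s * c)
    _ ≤ K * (#S * exp (s ^ 2 * (b - a) ^ 2 / 8)) := by gcongr
    _ = #S * K * exp (s ^ 2 * (b - a) ^ 2 / 8) := by ring

theorem Finset.sum_powersetCard_exp_mul_sum_sub_le {ι : Type*} [DecidableEq ι] (S : Finset ι)
    (x : ι → ℝ) {a b : ℝ} (hx : ∀ i ∈ S, x i ∈ Set.Icc a b) (r : ℕ) (s : ℝ) :
    ∑ I ∈ S.powersetCard r, exp (s * (∑ i ∈ I, x i - r * 𝔼 j ∈ S, x j)) ≤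
      (#S).choose r * exp (s ^ 2 * r * (b - a) ^ 2 / 8) := by
  induction r generalizing S with
  | zero => simp
  | succ r ih =>
    rcases lt_or_ge #S (r + 1) with hS | hS
    · rw [powersetCard_eq_empty.2 hS, sum_empty]
      positivity
    have step := mul_sum_powersetCard_succ_exp_le x hx hS s fun i hi ↦ by
      simpa [card_erase_of_mem hi] using ih (S.erase i) fun j hj ↦ hx j (mem_of_mem_erase hj)
    have hchoose : (#S : ℝ) * (#S - 1).choose r = (r + 1 : ℕ) * (#S).choose (r + 1) := by
      obtain ⟨m, hm⟩ : ∃ m, #S = m + 1 := ⟨#S - 1, by omega⟩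
      rw [hm, Nat.add_sub_cancel]
      exact_mod_cast (Nat.add_one_mul_choose_eq m r).trans (mul_comm _ _)
    refine le_of_mul_le_mul_left (step.trans_eq ?_) (by positivity : (0 : ℝ) < (r + 1 : ℕ))
    rw [← mul_assoc, ← mul_assoc ((r + 1 : ℕ) : ℝ), ← hchoose, mul_assoc, ← exp_add]
    push_cast; ring_nf

theorem Finset.card_powersetCard_upper_deviation_le {ι : Type*} [DecidableEq ι] (S : Finset ι)
    (x : ι → ℝ) {a b : ℝ} (hx : ∀ i ∈ S, x i ∈ Set.Icc a b) (n : ℕ) {t : ℝ} (ht : 0 ≤ t) :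
    (#{I ∈ S.powersetCard n | n * t ≤ ∑ i ∈ I, x i - n * 𝔼 j ∈ S, x j} : ℝ) ≤
      (#S).choose n * exp (-2 * n * t ^ 2 / (b - a) ^ 2) := by
  set s := 4 * t / (b - a) ^ 2
  have hs : 0 ≤ s := by positivity
  have hexp : s ^ 2 * n * (b - a) ^ 2 / 8 - s * (n * t) = -2 * n * t ^ 2 / (b - a) ^ 2 := by
    rcases eq_or_ne ((b - a) ^ 2) 0 with h | h
    · simp [s, h]
    · simp only [s]; field_simp; ring
  calc (#{I ∈ S.powersetCard n | n * t ≤ ∑ i ∈ I, x i - n * 𝔼 j ∈ S, x j} : ℝ)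
      = ∑ I ∈ S.powersetCard n with n * t ≤ ∑ i ∈ I, x i - n * 𝔼 j ∈ S, x j, 1 := by simp
    _ ≤ ∑ I ∈ S.powersetCard n with n * t ≤ ∑ i ∈ I, x i - n * 𝔼 j ∈ S, x j,
          exp (s * (∑ i ∈ I, x i - n * 𝔼 j ∈ S, x j) - s * (n * t)) := by
        refine sum_le_sum fun I hI ↦ one_le_exp ?_
        have := (mem_filter.1 hI).2
        nlinarith
    _ ≤ ∑ I ∈ S.powersetCard n,
          exp (s * (∑ i ∈ I, x i - n * 𝔼 j ∈ S, x j)) * exp (-(s * (n * t))) := by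
        simp_rw [← exp_add, ← sub_eq_add_neg]
        exact sum_le_sum_of_subset_of_nonneg (filter_subset _ _) fun _ _ _ ↦ (exp_pos _).le
    _ ≤ (#S).choose n * exp (s ^ 2 * n * (b - a) ^ 2 / 8) * exp (-(s * (n * t))) := by
        rw [← sum_mul]
        gcongr
        exact sum_powersetCard_exp_mul_sum_sub_le S x hx n s
    _ = (#S).choose n * exp (-2 * n * t ^ 2 / (b - a) ^ 2) := by
        rw [mul_assoc, ← exp_add, ← sub_eq_add_neg, hexp]

theorem Finset.card_powersetCard_lower_deviation_le {ι : Type*} [DecidableEq ι] (S : Finset ι)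
    (x : ι → ℝ) {a b : ℝ} (hx : ∀ i ∈ S, x i ∈ Set.Icc a b) (n : ℕ) {t : ℝ} (ht : 0 ≤ t) :
    (#{I ∈ S.powersetCard n | ∑ i ∈ I, x i - n * 𝔼 j ∈ S, x j ≤ -(n * t)} : ℝ) ≤
      (#S).choose n * exp (-2 * n * t ^ 2 / (b - a) ^ 2) := by
  have hnx : ∀ i ∈ S, -x i ∈ Set.Icc (-b) (-a) := fun i hi ↦ by
    simpa [and_comm] using hx i hi
  have := card_powersetCard_upper_deviation_le S (fun i ↦ -x i) hnx n ht
  simp only [sum_neg_distrib, expect_neg_distrib, sub_neg_eq_add] at this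
  convert this using 4 with I
  · constructor <;> intro h <;> linarith
  · ring

theorem Finset.card_powersetCard_abs_deviation_le {ι : Type*} [DecidableEq ι]
    (S : Finset ι) (x : ι → ℝ) {a b : ℝ} (hx : ∀ i ∈ S, x i ∈ Set.Icc a b) {n : ℕ} (hn : 0 < n)
    {t : ℝ} (ht : 0 ≤ t) :
    (#{I ∈ S.powersetCard n | t < |𝔼 j ∈ S, x j - (∑ i ∈ I, x i) / n|} : ℝ) ≤
      2 * (#S).choose n * exp (-2 * n * t ^ 2 / (b - a) ^ 2) := by
  have hn' : (0 : ℝ) < n := by exact_mod_cast hn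
  have hsplit : {I ∈ S.powersetCard n | t < |𝔼 j ∈ S, x j - (∑ i ∈ I, x i) / n|} ⊆
      {I ∈ S.powersetCard n | n * t ≤ ∑ i ∈ I, x i - n * 𝔼 j ∈ S, x j} ∪
      {I ∈ S.powersetCard n | ∑ i ∈ I, x i - n * 𝔼 j ∈ S, x j ≤ -(n * t)} := by
    intro I hI
    simp only [mem_union, mem_filter] at hI ⊢
    have : n * t < |∑ i ∈ I, x i - n * 𝔼 j ∈ S, x j| := by
      have : ∑ i ∈ I, x i - n * 𝔼 j ∈ S, x j = -(n * (𝔼 j ∈ S, x j - (∑ i ∈ I, x i) / n)) := by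
        field_simp; ring
      rw [this, abs_neg, abs_mul, abs_of_pos hn']
      exact mul_lt_mul_of_pos_left hI.2 hn'
    rcases lt_abs.1 this with h | h
    · exact .inl ⟨hI.1, h.le⟩
    · exact .inr ⟨hI.1, by linarith⟩
  calc _ ≤ (#({I ∈ S.powersetCard n | n * t ≤ ∑ i ∈ I, x i - n * 𝔼 j ∈ S, x j} ∪
        {I ∈ S.powersetCard n | ∑ i ∈ I, x i - n * 𝔼 j ∈ S, x j ≤ -(n * t)}) : ℝ) := by
        exact_mod_cast card_le_card hsplit
    _ ≤ _ := by exact_mod_cast card_union_le _ _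
    _ ≤ _ := add_le_add (card_powersetCard_upper_deviation_le S x hx n ht)
        (card_powersetCard_lower_deviation_le S x hx n ht)
    _ = _ := by ring

theorem Finset.card_sub_le_card_filter {α : Type*} {s : Finset α} {p : α → Prop}
    [DecidablePred p] {a : ℝ} (hp : (#{x ∈ s | ¬p x} : ℝ) ≤ a) :
    #s - a ≤ #{x ∈ s | p x} := by
  rw [← card_filter_add_card_filter_not (s := s) p, Nat.cast_add]
  linarith

theorem Finset.card_sub_add_le_card_filter_and {α : Type*} [DecidableEq α] {s : Finset α}
    {p q : α → Prop} [DecidablePred p] [DecidablePred q] {a b : ℝ} (hp : (#{x ∈ s | ¬p x} : ℝ) ≤ a)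
    (hq : #s - b ≤ #{x ∈ s | q x}) :
    #s - (a + b) ≤ #{x ∈ s | p x ∧ q x} := by
  have hsub : {x ∈ s | q x} ⊆ {x ∈ s | p x ∧ q x} ∪ {x ∈ s | ¬p x} := by
    intro x hx
    simp only [mem_union, mem_filter] at hx ⊢
    tauto
  have : (#{x ∈ s | q x} : ℝ) ≤ #{x ∈ s | p x ∧ q x} + #{x ∈ s | ¬p x} := by
    exact_mod_cast (card_le_card hsub).trans (card_union_le _ _)
  linarith

theorem card_filter_abs_mean_sub_sample_mean_gt_le {N n : ℕ} (hn : 0 < n) (x : Fin N → ℝ)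
    {a b : ℝ} (hab : a < b) (hx : ∀ i, x i ∈ Set.Icc a b) {δ : ℝ} (hδ : 0 < δ) (hδ2 : δ ≤ 2)
    {τ : ℝ} (hτ : τ = √(log (2 / δ) * (b - a) ^ 2 / (2 * n))) :
    (#{I ∈ powersetCard n (univ : Finset (Fin N)) |
        ¬|1 / (N : ℝ) * ∑ i, x i - 1 / (n : ℝ) * ∑ i ∈ I, x i| ≤ τ} : ℝ) ≤
      δ * #(powersetCard n (univ : Finset (Fin N))) := by
  have hlog : 0 ≤ log (2 / δ) := log_nonneg (by rw [le_div_iff₀ hδ]; linarith)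
  have hba : b - a ≠ 0 := sub_ne_zero.2 hab.ne'
  have hτ2 : τ ^ 2 = log (2 / δ) * (b - a) ^ 2 / (2 * n) := by
    rw [hτ, sq_sqrt (by positivity)]
  have hexp : exp (-2 * n * τ ^ 2 / (b - a) ^ 2) = δ / 2 := by
    rw [hτ2, show -2 * n * (log (2 / δ) * (b - a) ^ 2 / (2 * n)) / (b - a) ^ 2 = -log (2 / δ) by
      field_simp, exp_neg, exp_log (by positivity), inv_div]
  have := card_powersetCard_abs_deviation_le univ x (fun i _ ↦ hx i) hn (hτ ▸ sqrt_nonneg _)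
  simp only [Fintype.expect_eq_sum_div_card, card_univ, Fintype.card_fin, hexp] at this
  simp only [one_div_mul_eq_div, not_le]
  refine this.trans_eq ?_
  simp only [card_powersetCard, card_univ, Fintype.card_fin]
  ring

/-- Simultaneous Hoeffding bounds for the five parameters of Pearson's correlation:
if `(A₁,B₁), …, (A_N,B_N)` are pairs with entries in `[0, C]` (`C > 0`), `n` pairs
are sampled uniformly at random without replacement, `0 < α < 1`,
`t = √(ln(10/α)·C²/(2n))` and `t' = √(ln(10/α)·C⁴/(2n))`, then with probability at
least `1 − α` all five bounds hold: `|μ_A − μ_a| ≤ t`, `|μ_B − μ_b| ≤ t`,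
`|ν_A − ν_a| ≤ t'`, `|ν_B − ν_b| ≤ t'`, and `|ν_{A,B} − ν_{a,b}| ≤ t'`. -/
theorem five_parameter_union_bound (N n : ℕ) (hn : 0 < n) (hnN : n ≤ N)
    (A B : Fin N → ℝ) (C : ℝ) (hC : 0 < C)
    (hA : ∀ i, 0 ≤ A i ∧ A i ≤ C) (hB : ∀ i, 0 ≤ B i ∧ B i ≤ C)
    (α : ℝ) (hα : 0 < α) (hα1 : α < 1) :
    let t := Real.sqrt (Real.log (10 / α) * C ^ 2 / (2 * n))
    let t' := Real.sqrt (Real.log (10 / α) * C ^ 4 / (2 * n))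
    (((Finset.powersetCard n (Finset.univ : Finset (Fin N))).filter
        (fun I =>
          |(1 / (N : ℝ)) * ∑ i, A i - (1 / (n : ℝ)) * ∑ i ∈ I, A i| ≤ t ∧
          |(1 / (N : ℝ)) * ∑ i, B i - (1 / (n : ℝ)) * ∑ i ∈ I, B i| ≤ t ∧
          |(1 / (N : ℝ)) * ∑ i, (A i) ^ 2 - (1 / (n : ℝ)) * ∑ i ∈ I, (A i) ^ 2| ≤ t' ∧
          |(1 / (N : ℝ)) * ∑ i, (B i) ^ 2 - (1 / (n : ℝ)) * ∑ i ∈ I, (B i) ^ 2| ≤ t' ∧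
          |(1 / (N : ℝ)) * ∑ i, A i * B i
              - (1 / (n : ℝ)) * ∑ i ∈ I, A i * B i| ≤ t')).card : ℝ)
      / ((Finset.powersetCard n (Finset.univ : Finset (Fin N))).card : ℝ)
    ≥ 1 - α := by
  intro t t'
  have hP : (0 : ℝ) < #(powersetCard n (univ : Finset (Fin N))) := by
    simpa using Nat.choose_pos hnN
  have hδ : 2 / (α / 5) = 10 / α := by field_simp; norm_num
  have ht : t = √(log (2 / (α / 5)) * (C - 0) ^ 2 / (2 * n)) := by rw [hδ, sub_zero]
  have ht' : t' = √(log (2 / (α / 5)) * (C ^ 2 - 0) ^ 2 / (2 * n)) := by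
    rw [hδ, sub_zero, ← pow_mul]
  have hC2 : 0 < C ^ 2 := by positivity
  have hA2 (i : Fin N) : A i ^ 2 ∈ Set.Icc 0 (C ^ 2) :=
    ⟨sq_nonneg _, pow_le_pow_left₀ (hA i).1 (hA i).2 2⟩
  have hB2 (i : Fin N) : B i ^ 2 ∈ Set.Icc 0 (C ^ 2) :=
    ⟨sq_nonneg _, pow_le_pow_left₀ (hB i).1 (hB i).2 2⟩
  have hAB (i : Fin N) : A i * B i ∈ Set.Icc 0 (C ^ 2) :=
    ⟨mul_nonneg (hA i).1 (hB i).1, sq C ▸ mul_le_mul (hA i).2 (hB i).2 (hB i).1 hC.le⟩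
  have hα5 : 0 < α / 5 := by positivity
  have hα52 : α / 5 ≤ 2 := by linarith
  have good := card_sub_add_le_card_filter_and
    (card_filter_abs_mean_sub_sample_mean_gt_le hn A hC hA hα5 hα52 ht) <|
    card_sub_add_le_card_filter_and
    (card_filter_abs_mean_sub_sample_mean_gt_le hn B hC hB hα5 hα52 ht) <|
    card_sub_add_le_card_filter_and
    (card_filter_abs_mean_sub_sample_mean_gt_le hn (A · ^ 2) hC2 hA2 hα5 hα52 ht') <|
    card_sub_add_le_card_filter_and
    (card_filter_abs_mean_sub_sample_mean_gt_le hn (B · ^ 2) hC2 hB2 hα5 hα52 ht') <|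
    card_sub_le_card_filter
    (card_filter_abs_mean_sub_sample_mean_gt_le hn (fun i ↦ A i * B i) hC2 hAB hα5 hα52 ht')
  rw [ge_iff_le, le_div_iff₀ hP]
  linarith
end

section
/- Let (A_1, B_1), …, (A_N, B_N) be pairs of real numbers with 0 ≤ A_i ≤ C and 0 ≤ B_i ≤ C, C > 0, whose population parameters μ_A, μ_B, ν_A, ν_B, ν_{A,B} satisfy ν_A − μ_A² > 0 and ν_B − μ_B² > 0, and let ρ = (ν_{A,B} − μ_A·μ_B) / (√(ν_A − μ_A²)·√(ν_B − μ_B²)) be the population Pearson correlation. Sample n pairs uniformly at random without replacement, let μ_a, μ_b, ν_a, ν_b, ν_{a,b} be the sample analogues, let 0 < α < 1, t = √( ln(10/α)·C²/(2n) ), t' = √( ln(10/α)·C⁴/(2n) ), and define the (random) bounds μ_A^low = max(0, μ_a − t), μ_A^high = μ_a + t, μ_B^low = max(0, μ_b − t), μ_B^high = μ_b + t, ν_A^low = ν_a − t', ν_A^high = ν_a + t', ν_B^low = ν_b − t', ν_B^high = ν_b + t', ν_{A,B}^low = ν_{a,b} − t', ν_{A,B}^high = ν_{a,b} + t'. Define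 num_low, num_high, den_low, den_high, ρ^low, ρ^high from these bounds as in the paper's case analysis (num_low = ν_{A,B}^low − μ_A^high·μ_B^high, num_high = ν_{A,B}^high − μ_A^low·μ_B^low; den_low and den_high as the square roots of the products of the clamped variance bounds; ρ^low = num_low/den_high if num_low ≥ 0 else num_low/den_low; ρ^high = num_high/den_low if num_high ≥ 0 else num_high/den_high). Then with probability at least 1 − α, the implication holds: if den_low > 0 then ρ^low ≤ ρ ≤ ρ^high. -/
open scoped Classical

open Real Finset

/-!
For a uniformly random `n`-subset `I` of the population, the moment generating function of
`∑ i ∈ I, x i` is `e_n(exp (λ x)) / C(N, n)`, with `e_n` the elementary symmetric polynomial.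
The Newton-type step `e_{k+1} / C(N, k+1) ≤ mean(z) · e_k / C(N, k)`, which comes from
Cauchy–Schwarz on the complement of each `k`-set, gives `e_n / C(N, n) ≤ mean(exp (λ x)) ^ n`:
the mgf without replacement is at most the mgf with replacement. Hoeffding's lemma and the
Chernoff argument then give Hoeffding's bound `2 exp (-2 n ε² / (b - a)²)` for sampling without
replacement. The radii `t`, `t'` make each of the five sample moments fall outside its radius
with probability at most `α / 5`. On the complement of these five events (probability
`≥ 1 - α`) every population moment lies in its interval, and the intervals then bound the
numerator and the denominator of `ρ`, and hence `ρ` itself.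
-/

namespace Finset

variable {ι : Type*}

theorem sum_powersetCard_succ_sum_erase {β : Type*} [AddCommMonoid β] (s : Finset ι) (k : ℕ)
    (F : Finset ι → ι → β) :
    ∑ I ∈ s.powersetCard (k + 1), ∑ i ∈ I, F (I.erase i) i
      = ∑ K ∈ s.powersetCard k, ∑ i ∈ s \ K, F K i := by
  rw [sum_sigma', sum_sigma']
  refine sum_nbij' (fun x => ⟨x.1.erase x.2, x.2⟩) (fun x => ⟨insert x.2 x.1, x.2⟩)
    ?_ ?_ ?_ ?_ (fun _ _ => rfl)
  · rintro ⟨I, i⟩ hx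
    simp only [mem_sigma, mem_powersetCard] at hx ⊢
    exact ⟨⟨(erase_subset _ _).trans hx.1.1, by rw [card_erase_of_mem hx.2, hx.1.2]; rfl⟩,
      mem_sdiff.2 ⟨hx.1.1 hx.2, notMem_erase _ _⟩⟩
  · rintro ⟨K, i⟩ hx
    simp only [mem_sigma, mem_powersetCard, mem_sdiff] at hx ⊢
    exact ⟨⟨insert_subset hx.2.1 hx.1.1, by rw [card_insert_of_notMem hx.2.2, hx.1.2]⟩,
      mem_insert_self _ _⟩
  · rintro ⟨I, i⟩ hx
    simp [insert_erase (mem_sigma.1 hx).2]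
  · rintro ⟨K, i⟩ hx
    simp [erase_insert (mem_sdiff.1 (mem_sigma.1 hx).2).2]

theorem succ_mul_sum_powersetCard_succ {R : Type*} [CommSemiring R] (s : Finset ι) (k : ℕ)
    (w : Finset ι → R) (z : ι → R) :
    (k + 1 : R) * ∑ I ∈ s.powersetCard (k + 1), w I * ∏ i ∈ I, z i
      = ∑ K ∈ s.powersetCard k, ∑ j ∈ s \ K, w (insert j K) * (z j * ∏ i ∈ K, z i) := by
  rw [← sum_powersetCard_succ_sum_erase, mul_sum]
  refine sum_congr rfl fun I hI => ?_
  have hterm : ∀ j ∈ I, w (insert j (I.erase j)) * (z j * ∏ i ∈ I.erase j, z i)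
      = w I * ∏ i ∈ I, z i := fun j hj => by rw [insert_erase hj, mul_prod_erase I z hj]
  rw [sum_congr rfl hterm, sum_const, (mem_powersetCard.1 hI).2, nsmul_eq_mul]
  push_cast
  rfl

theorem sum_mul_sum_erase_le (s : Finset ι) (z : ι → ℝ) :
    ∑ j ∈ s, (∑ i ∈ s.erase j, z i) * z j ≤ (#s - 1) * ∑ j ∈ s, z j ^ 2 := by
  have hCS := sq_sum_le_card_mul_sum_sq (s := s) (f := z)
  have hexp : ∑ j ∈ s, (∑ i ∈ s.erase j, z i) * z j
      = (∑ i ∈ s, z i) ^ 2 - ∑ j ∈ s, z j ^ 2 := by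
    rw [sum_congr rfl fun j hj => by rw [sum_erase_eq_sub hj]]
    simp only [sub_mul, sum_sub_distrib, ← mul_sum, sq]
  rw [hexp]
  linarith

theorem one_sub_mul_card_le_card_filter {α : Type*} [Fintype ι] {s : Finset α} {p : α → Prop}
    [DecidablePred p] {q : ι → α → Prop} [∀ k, DecidablePred (q k)] {δ : ℝ}
    (hq : ∀ k, (#{a ∈ s | ¬ q k a} : ℝ) ≤ δ * #s) (hpq : ∀ a ∈ s, (∀ k, q k a) → p a) :
    (1 - Fintype.card ι * δ) * #s ≤ #{a ∈ s | p a} := by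
  have hsub : {a ∈ s | ¬ p a} ⊆ univ.biUnion fun k => {a ∈ s | ¬ q k a} := by
    intro a ha
    obtain ⟨has, hpa⟩ := mem_filter.1 ha
    obtain ⟨k, hk⟩ := not_forall.1 (mt (hpq a has) hpa)
    exact mem_biUnion.2 ⟨k, mem_univ _, mem_filter.2 ⟨has, hk⟩⟩
  have hbad : (#{a ∈ s | ¬ p a} : ℝ) ≤ Fintype.card ι * δ * #s := calc
    _ ≤ (∑ k, #{a ∈ s | ¬ q k a} : ℝ) := by
        exact_mod_cast (card_le_card hsub).trans card_biUnion_le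
    _ ≤ ∑ _k : ι, δ * #s := sum_le_sum fun k _ => hq k
    _ = _ := by rw [sum_const, card_univ, nsmul_eq_mul, mul_assoc]
  have hsplit := card_filter_add_card_filter_not (s := s) p
  rw [← Nat.cast_inj (R := ℝ), Nat.cast_add] at hsplit
  linarith

end Finset

section Maclaurin

variable {ι : Type*} [Fintype ι] {z : ι → ℝ}

theorem mul_sum_powersetCard_sum_sdiff_le (hz : 0 ≤ z) (k : ℕ) :
    k * ∑ I ∈ univ.powersetCard k, (∑ i ∈ univ \ I, z i) * ∏ i ∈ I, z i
      ≤ (Fintype.card ι - k) *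
          ∑ I ∈ univ.powersetCard k, (∑ i ∈ I, z i) * ∏ i ∈ I, z i := by
  rcases k with _ | m
  · simp
  have hin : ∑ I ∈ univ.powersetCard (m + 1), (∑ i ∈ I, z i) * ∏ i ∈ I, z i
      = ∑ K ∈ univ.powersetCard m, ∑ j ∈ univ \ K, z j ^ 2 * ∏ i ∈ K, z i := by
    rw [← sum_powersetCard_succ_sum_erase]
    refine sum_congr rfl fun I _ => ?_
    rw [sum_mul]
    exact sum_congr rfl fun j hj => by rw [← mul_prod_erase I z hj]; ring
  have hK : ∀ K ∈ univ.powersetCard m,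
      ∑ j ∈ univ \ K, (∑ i ∈ univ \ insert j K, z i) * (z j * ∏ i ∈ K, z i)
        ≤ (Fintype.card ι - (m + 1 : ℕ)) * ∑ j ∈ univ \ K, z j ^ 2 * ∏ i ∈ K, z i := by
    intro K hK
    have hcard : (#(univ \ K) : ℝ) - 1 = Fintype.card ι - (m + 1 : ℕ) := by
      rw [card_univ_sdiff, (mem_powersetCard.1 hK).2,
        Nat.cast_sub ((mem_powersetCard.1 hK).2 ▸ card_le_univ K)]
      push_cast; ring
    calc ∑ j ∈ univ \ K, (∑ i ∈ univ \ insert j K, z i) * (z j * ∏ i ∈ K, z i)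
        = (∑ j ∈ univ \ K, (∑ i ∈ (univ \ K).erase j, z i) * z j) * ∏ i ∈ K, z i := by
          simp only [sdiff_insert, sum_mul, mul_assoc]
      _ ≤ ((#(univ \ K) : ℝ) - 1) * (∑ j ∈ univ \ K, z j ^ 2) * ∏ i ∈ K, z i :=
          mul_le_mul_of_nonneg_right (sum_mul_sum_erase_le _ _) (prod_nonneg fun i _ => hz i)
      _ = _ := by rw [hcard, mul_assoc, sum_mul]
  calc ((m + 1 : ℕ) : ℝ) *
        ∑ I ∈ univ.powersetCard (m + 1), (∑ i ∈ univ \ I, z i) * ∏ i ∈ I, z i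
      = ∑ K ∈ univ.powersetCard m,
          ∑ j ∈ univ \ K, (∑ i ∈ univ \ insert j K, z i) * (z j * ∏ i ∈ K, z i) := by
        push_cast; exact succ_mul_sum_powersetCard_succ _ _ _ _
    _ ≤ _ := by rw [hin, mul_sum]; exact sum_le_sum hK

theorem card_mul_succ_mul_esymm_succ_le (hz : 0 ≤ z) (k : ℕ) :
    Fintype.card ι * ((k + 1) * (univ.val.map z).esymm (k + 1))
      ≤ (Fintype.card ι - k) * ((∑ i, z i) * (univ.val.map z).esymm k) := by
  have hsucc := succ_mul_sum_powersetCard_succ univ k (fun _ => (1 : ℝ)) z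
  simp only [one_mul] at hsucc
  have hsplit : (∑ i, z i) * (univ.val.map z).esymm k
      = ∑ I ∈ univ.powersetCard k, (∑ i ∈ I, z i) * ∏ i ∈ I, z i
        + ∑ I ∈ univ.powersetCard k, (∑ i ∈ univ \ I, z i) * ∏ i ∈ I, z i := by
    rw [esymm_map_val, mul_sum, ← sum_add_distrib]
    exact sum_congr rfl fun I _ => by rw [← add_mul, add_comm, sum_sdiff (subset_univ I)]
  have hout : ∑ K ∈ univ.powersetCard k, ∑ j ∈ univ \ K, z j * ∏ i ∈ K, z i
      = ∑ I ∈ univ.powersetCard k, (∑ i ∈ univ \ I, z i) * ∏ i ∈ I, z i :=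
    sum_congr rfl fun _ _ => (sum_mul ..).symm
  rw [esymm_map_val, hsucc, hsplit, hout]
  linarith [mul_sum_powersetCard_sum_sdiff_le hz k]

theorem esymm_le_choose_mul_mean_pow (hz : 0 ≤ z) (k : ℕ) :
    (univ.val.map z).esymm k
      ≤ (Fintype.card ι).choose k * ((1 / (Fintype.card ι : ℝ)) * ∑ i, z i) ^ k := by
  set N := Fintype.card ι
  set μ := (1 / (N : ℝ)) * ∑ i, z i
  have hμ : 0 ≤ μ := mul_nonneg (by positivity) (sum_nonneg fun i _ => hz i)
  induction k with
  | zero => simp [esymm_map_val]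
  | succ k ih =>
    rcases lt_or_ge k N with hk | hk
    · have hN : (0 : ℝ) < N := by norm_cast; omega
      have hsum : ∑ i, z i = N * μ := by simp only [μ]; field_simp
      have hchoose : ((k + 1 : ℕ) : ℝ) * N.choose (k + 1) = (N - k) * N.choose k := by
        rw [← Nat.cast_sub hk.le, ← Nat.cast_mul, ← Nat.cast_mul, mul_comm,
          Nat.choose_succ_right_eq, mul_comm]
      refine le_of_mul_le_mul_left ?_ (by positivity : (0 : ℝ) < N * (k + 1))
      calc N * (k + 1) * (univ.val.map z).esymm (k + 1)
          ≤ (N - k) * ((∑ i, z i) * (univ.val.map z).esymm k) := by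
            rw [mul_assoc]; exact card_mul_succ_mul_esymm_succ_le hz k
        _ ≤ (N - k) * ((∑ i, z i) * (N.choose k * μ ^ k)) := by
            have : (0 : ℝ) ≤ N - k := by rw [sub_nonneg]; exact_mod_cast hk.le
            gcongr
            exact sum_nonneg fun i _ => hz i
        _ = N * (k + 1) * (N.choose (k + 1) * μ ^ (k + 1)) := by
            rw [hsum]; push_cast at hchoose; linear_combination N * μ ^ (k + 1) * hchoose.symm
    · have : (univ.val.map z).esymm (k + 1) = 0 := by
        rw [esymm_map_val, powersetCard_eq_empty.2 (by rw [card_univ]; omega), sum_empty]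
      rw [this]
      positivity

end Maclaurin

section Hoeffding

variable {ι : Type*} [Fintype ι] [Nonempty ι] {n : ℕ} {a b ε : ℝ}

theorem mean_exp_mul_le_of_mem_Icc (x : ι → ℝ) (hx : ∀ i, x i ∈ Set.Icc a b) (lam : ℝ) :
    (1 / (Fintype.card ι : ℝ)) * ∑ i, exp (lam * x i)
      ≤ exp (lam * ((1 / (Fintype.card ι : ℝ)) * ∑ i, x i) + lam ^ 2 * (b - a) ^ 2 / 8) := by
  let _ : MeasurableSpace ι := ⊤
  have _ : DiscreteMeasurableSpace ι := ⟨fun _ => trivial⟩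
  let μ := (PMF.uniformOfFintype ι).toMeasure
  have hint : ∀ f : ι → ℝ, ∫ i, f i ∂μ = (1 / (Fintype.card ι : ℝ)) * ∑ i, f i := by
    intro f
    simp [μ, PMF.integral_eq_sum, mul_sum]
  have h := (ProbabilityTheory.hasSubgaussianMGF_of_mem_Icc (μ := μ) (X := x)
    (Measurable.of_discrete).aemeasurable (Filter.Eventually.of_forall hx)).mgf_le lam
  simp only [ProbabilityTheory.mgf, hint] at h
  set m := (1 / (Fintype.card ι : ℝ)) * ∑ i, x i
  have hsplit : ∀ i, exp (lam * (x i - m)) = exp (lam * x i) * exp (-(lam * m)) := by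
    intro i; rw [← exp_add]; ring_nf
  simp only [hsplit, ← sum_mul] at h
  rw [← mul_assoc, ← le_div_iff₀ (exp_pos _), ← exp_sub] at h
  refine h.trans_eq (congrArg exp ?_)
  push_cast
  rw [div_pow, Real.norm_eq_abs, sq_abs]
  ring

theorem card_filter_mean_add_le_sampleMean_le (hn : 0 < n) (x : ι → ℝ)
    (hx : ∀ i, x i ∈ Set.Icc a b) (hε : 0 ≤ ε) :
    (#{I ∈ univ.powersetCard n |
        (1 / (Fintype.card ι : ℝ)) * ∑ i, x i + ε ≤ (1 / (n : ℝ)) * ∑ i ∈ I, x i} : ℝ)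
      ≤ (Fintype.card ι).choose n * exp (-(2 * n * ε ^ 2 / (b - a) ^ 2)) := by
  set μ := (1 / (Fintype.card ι : ℝ)) * ∑ i, x i
  set S := {I ∈ (univ : Finset ι).powersetCard n | μ + ε ≤ (1 / (n : ℝ)) * ∑ i ∈ I, x i}
  -- `λ = 4ε / (b - a)²` minimises the Chernoff exponent `n (λ² (b - a)² / 8 - λ ε)`
  set lam := 4 * ε / (b - a) ^ 2
  have hlam : 0 ≤ lam := by positivity
  have hn' : (0 : ℝ) < n := by exact_mod_cast hn
  have hbad : ∀ I ∈ S, exp (lam * (n * (μ + ε))) ≤ ∏ i ∈ I, exp (lam * x i) := by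
    intro I hI
    rw [← exp_sum, ← mul_sum]
    gcongr
    have h := (mem_filter.1 hI).2
    rwa [one_div_mul_eq_div, le_div_iff₀ hn', mul_comm] at h
  have hz : (0 : ι → ℝ) ≤ fun i => exp (lam * x i) := fun i => (exp_pos _).le
  have hcount := calc
    (#S : ℝ) * exp (lam * (n * (μ + ε)))
      ≤ ∑ I ∈ univ.powersetCard n, ∏ i ∈ I, exp (lam * x i) := by
        rw [← nsmul_eq_mul]
        refine (card_nsmul_le_sum _ _ _ hbad).trans
          (sum_le_sum_of_subset_of_nonneg (filter_subset _ _) fun I _ _ => ?_)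
        positivity
    _ ≤ (Fintype.card ι).choose n *
          ((1 / (Fintype.card ι : ℝ)) * ∑ i, exp (lam * x i)) ^ n := by
        rw [← esymm_map_val]; exact esymm_le_choose_mul_mean_pow hz n
    _ ≤ (Fintype.card ι).choose n * exp (lam * μ + lam ^ 2 * (b - a) ^ 2 / 8) ^ n := by
        gcongr; exact mean_exp_mul_le_of_mem_Icc x hx lam
  rw [← le_div_iff₀ (exp_pos _), ← exp_nat_mul, mul_div_assoc, ← exp_sub] at hcount
  refine hcount.trans_eq (congrArg _ (congrArg exp ?_))
  rcases eq_or_ne (b - a) 0 with hab | hab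
  · -- both exponents are `0`, since `x / 0 = 0`
    simp [lam, hab]
  · simp only [lam]; field_simp; ring

theorem card_filter_abs_sampleMean_sub_mean_gt_le (hn : 0 < n) (x : ι → ℝ)
    (hx : ∀ i, x i ∈ Set.Icc a b) (hε : 0 ≤ ε) :
    (#{I ∈ (univ : Finset ι).powersetCard n |
        ¬ |(1 / (n : ℝ)) * ∑ i ∈ I, x i - (1 / (Fintype.card ι : ℝ)) * ∑ i, x i| ≤ ε} : ℝ)
      ≤ 2 * ((Fintype.card ι).choose n * exp (-(2 * n * ε ^ 2 / (b - a) ^ 2))) := by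
  set μ := (1 / (Fintype.card ι : ℝ)) * ∑ i, x i
  have hup := card_filter_mean_add_le_sampleMean_le hn x hx hε
  have hlow := card_filter_mean_add_le_sampleMean_le hn (fun i => -x i) (a := -b) (b := -a)
    (fun i => ⟨neg_le_neg (hx i).2, neg_le_neg (hx i).1⟩) hε
  simp only [sum_neg_distrib, mul_neg, neg_sub_neg] at hlow
  have hsplit : ∀ I : Finset ι, ¬ |(1 / (n : ℝ)) * ∑ i ∈ I, x i - μ| ≤ ε →
      μ + ε ≤ (1 / (n : ℝ)) * ∑ i ∈ I, x i ∨ -μ + ε ≤ -((1 / (n : ℝ)) * ∑ i ∈ I, x i) := by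
    intro I h
    rcases lt_abs.1 (not_le.1 h) with h | h
    · exact Or.inl (by linarith)
    · exact Or.inr (by linarith)
  calc _ ≤ (#({I ∈ (univ : Finset ι).powersetCard n | μ + ε ≤ (1 / (n : ℝ)) * ∑ i ∈ I, x i}
          ∪ {I ∈ (univ : Finset ι).powersetCard n |
              -μ + ε ≤ -((1 / (n : ℝ)) * ∑ i ∈ I, x i)}) : ℝ) := by
        rw [← filter_or]
        exact_mod_cast card_le_card (monotone_filter_right _ fun I _ => hsplit I)
    _ ≤ _ := by
        grw [card_union_le]
        push_cast
        linarith

theorem card_filter_abs_sampleMean_sub_mean_gt_le_mul_card (hn : 0 < n) (x : ι → ℝ)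
    (hab : a < b) (hx : ∀ i, x i ∈ Set.Icc a b) {δ : ℝ} (hδ : 0 < δ) (hε : 0 ≤ ε)
    (hεδ : log (2 / δ) * (b - a) ^ 2 / (2 * n) ≤ ε ^ 2) :
    (#{I ∈ (univ : Finset ι).powersetCard n |
        ¬ |(1 / (n : ℝ)) * ∑ i ∈ I, x i - (1 / (Fintype.card ι : ℝ)) * ∑ i, x i| ≤ ε} : ℝ)
      ≤ δ * #((univ : Finset ι).powersetCard n) := by
  have hexp : exp (-(2 * n * ε ^ 2 / (b - a) ^ 2)) ≤ δ / 2 := by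
    have hD : 0 < (b - a) ^ 2 := pow_pos (sub_pos.2 hab) 2
    have hn' : (0 : ℝ) < n := by exact_mod_cast hn
    rw [← exp_log (by positivity : 0 < δ / 2), exp_le_exp, neg_le, ← log_inv, inv_div,
      le_div_iff₀ hD]
    rw [div_le_iff₀ (by positivity)] at hεδ
    linarith
  grw [card_filter_abs_sampleMean_sub_mean_gt_le hn x hx hε, hexp, card_powersetCard,
    card_univ]
  linarith

end Hoeffding

section Sandwich

variable {K : Type*} [Field K] [LinearOrder K] [IsStrictOrderedRing K] {a a' d l h : K}

theorem ite_div_le_div (ha : a' ≤ a) (hl : 0 < l) (hld : l ≤ d) (hdh : d ≤ h) :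
    (if 0 ≤ a' then a' / h else a' / l) ≤ a / d := by
  have hd : 0 < d := hl.trans_le hld
  split_ifs with ha'
  · calc a' / h ≤ a' / d := div_le_div_of_nonneg_left ha' hd hdh
      _ ≤ a / d := div_le_div_of_nonneg_right ha hd.le
  · calc a' / l ≤ a' / d :=
        (div_le_div_iff₀ hl hd).2 (mul_le_mul_of_nonpos_left hld (le_of_not_ge ha'))
      _ ≤ a / d := div_le_div_of_nonneg_right ha hd.le

theorem div_le_ite_div (ha : a ≤ a') (hl : 0 < l) (hld : l ≤ d) (hdh : d ≤ h) :
    a / d ≤ (if 0 ≤ a' then a' / l else a' / h) := by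
  have hd : 0 < d := hl.trans_le hld
  split_ifs with ha'
  · calc a / d ≤ a' / d := div_le_div_of_nonneg_right ha hd.le
      _ ≤ a' / l := div_le_div_of_nonneg_left ha' hl hld
  · calc a / d ≤ a' / d := div_le_div_of_nonneg_right ha hd.le
      _ ≤ a' / h := (div_le_div_iff₀ hd (hd.trans_le hdh)).2
        (mul_le_mul_of_nonpos_left hdh (le_of_not_ge ha'))

end Sandwich

theorem correlation_sandwich {μA μB νA νB νAB μAl μAh μBl μBh νAl νAh νBl νBh νABl νABh : ℝ}
    (hμA : μA ∈ Set.Icc μAl μAh) (hμB : μB ∈ Set.Icc μBl μBh) (hνA : νA ∈ Set.Icc νAl νAh)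
    (hνB : νB ∈ Set.Icc νBl νBh) (hνAB : νAB ∈ Set.Icc νABl νABh) (hμAl : 0 ≤ μAl)
    (hμBl : 0 ≤ μBl) (hvarA : 0 < νA - μA ^ 2) (hvarB : 0 < νB - μB ^ 2) :
    let ρ := (νAB - μA * μB) / (√(νA - μA ^ 2) * √(νB - μB ^ 2))
    let numLow := νABl - μAh * μBh
    let numHigh := νABh - μAl * μBl
    let denLow := √(max 0 (νAl - μAh ^ 2) * max 0 (νBl - μBh ^ 2))
    let denHigh := √(max 0 (νAh - μAl ^ 2) * max 0 (νBh - μBl ^ 2))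
    0 < denLow →
      (if 0 ≤ numLow then numLow / denHigh else numLow / denLow) ≤ ρ ∧
        ρ ≤ (if 0 ≤ numHigh then numHigh / denLow else numHigh / denHigh) := by
  intro ρ numLow numHigh denLow denHigh hden
  obtain ⟨hμAl', hμAh⟩ := hμA
  obtain ⟨hμBl', hμBh⟩ := hμB
  have hμA0 : 0 ≤ μA := hμAl.trans hμAl'
  have hμB0 : 0 ≤ μB := hμBl.trans hμBl'
  have hsqA : μAl ^ 2 ≤ μA ^ 2 ∧ μA ^ 2 ≤ μAh ^ 2 := ⟨by gcongr, by gcongr⟩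
  have hsqB : μBl ^ 2 ≤ μB ^ 2 ∧ μB ^ 2 ≤ μBh ^ 2 := ⟨by gcongr, by gcongr⟩
  have hvarAl : max 0 (νAl - μAh ^ 2) ≤ νA - μA ^ 2 := max_le hvarA.le (by linarith [hνA.1])
  have hvarBl : max 0 (νBl - μBh ^ 2) ≤ νB - μB ^ 2 := max_le hvarB.le (by linarith [hνB.1])
  have hvarAh : νA - μA ^ 2 ≤ max 0 (νAh - μAl ^ 2) :=
    le_max_of_le_right (by linarith [hνA.2])
  have hvarBh : νB - μB ^ 2 ≤ max 0 (νBh - μBl ^ 2) :=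
    le_max_of_le_right (by linarith [hνB.2])
  have hden_eq : √(νA - μA ^ 2) * √(νB - μB ^ 2) = √((νA - μA ^ 2) * (νB - μB ^ 2)) :=
    (sqrt_mul hvarA.le _).symm
  have hdenLow : denLow ≤ √(νA - μA ^ 2) * √(νB - μB ^ 2) := by
    rw [hden_eq]; exact sqrt_le_sqrt (mul_le_mul hvarAl hvarBl (le_max_left _ _) hvarA.le)
  have hdenHigh : √(νA - μA ^ 2) * √(νB - μB ^ 2) ≤ denHigh := by
    rw [hden_eq]; exact sqrt_le_sqrt (mul_le_mul hvarAh hvarBh hvarB.le (le_max_left _ _))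
  have hnumLow : numLow ≤ νAB - μA * μB := by
    have : μA * μB ≤ μAh * μBh := mul_le_mul hμAh hμBh hμB0 (hμA0.trans hμAh)
    linarith [hνAB.1]
  have hnumHigh : νAB - μA * μB ≤ numHigh := by
    have : μAl * μBl ≤ μA * μB := by gcongr
    linarith [hνAB.2]
  exact ⟨ite_div_le_div hnumLow hden hdenLow hdenHigh,
    div_le_ite_div hnumHigh hden hdenLow hdenHigh⟩

/-- The paper's distribution-free confidence interval for Pearson's correlation from
a without-replacement subsample: with population parameters `μ_A, μ_B, ν_A, ν_B,
ν_{A,B}` of columns `A, B ∈ [0, C]^N` with positive variances and population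
correlation `ρ`, sample `n` pairs uniformly at random without replacement, form the
sample parameters and the random bounds `μ^low = max(0, μ̂ − t)`, `μ^high = μ̂ + t`,
`ν^low = ν̂ − t'`, `ν^high = ν̂ + t'` with `t = √(ln(10/α)·C²/(2n))`,
`t' = √(ln(10/α)·C⁴/(2n))`, and set `num`/`den`/`ρ^low`/`ρ^high` by the paper's case
analysis.  Then with probability at least `1 − α`: if `den_low > 0` then
`ρ^low ≤ ρ ≤ ρ^high`. -/
theorem correlation_confidence_interval (N n : ℕ) (hn : 0 < n) (hnN : n ≤ N)
    (A B : Fin N → ℝ) (C : ℝ) (hC : 0 < C)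
    (hA : ∀ i, 0 ≤ A i ∧ A i ≤ C) (hB : ∀ i, 0 ≤ B i ∧ B i ≤ C)
    (α : ℝ) (hα : 0 < α) (hα1 : α < 1)
    (hvarA : 0 < (1 / (N : ℝ)) * ∑ i, (A i) ^ 2 - ((1 / (N : ℝ)) * ∑ i, A i) ^ 2)
    (hvarB : 0 < (1 / (N : ℝ)) * ∑ i, (B i) ^ 2 - ((1 / (N : ℝ)) * ∑ i, B i) ^ 2) :
    let μA := (1 / (N : ℝ)) * ∑ i, A i
    let μB := (1 / (N : ℝ)) * ∑ i, B i
    let νA := (1 / (N : ℝ)) * ∑ i, (A i) ^ 2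
    let νB := (1 / (N : ℝ)) * ∑ i, (B i) ^ 2
    let νAB := (1 / (N : ℝ)) * ∑ i, A i * B i
    let ρ := (νAB - μA * μB) / (Real.sqrt (νA - μA ^ 2) * Real.sqrt (νB - μB ^ 2))
    let t := Real.sqrt (Real.log (10 / α) * C ^ 2 / (2 * n))
    let t' := Real.sqrt (Real.log (10 / α) * C ^ 4 / (2 * n))
    (((Finset.powersetCard n (Finset.univ : Finset (Fin N))).filter
        (fun I =>
          let μa := (1 / (n : ℝ)) * ∑ i ∈ I, A i
          let μb := (1 / (n : ℝ)) * ∑ i ∈ I, B i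
          let νa := (1 / (n : ℝ)) * ∑ i ∈ I, (A i) ^ 2
          let νb := (1 / (n : ℝ)) * ∑ i ∈ I, (B i) ^ 2
          let νab := (1 / (n : ℝ)) * ∑ i ∈ I, A i * B i
          let μAlow := max 0 (μa - t)
          let μAhigh := μa + t
          let μBlow := max 0 (μb - t)
          let μBhigh := μb + t
          let νAlow := νa - t'
          let νAhigh := νa + t'
          let νBlow := νb - t'
          let νBhigh := νb + t'
          let νABlow := νab - t'
          let νABhigh := νab + t'
          let numLow := νABlow - μAhigh * μBhigh
          let numHigh := νABhigh - μAlow * μBlow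
          let denLow :=
            Real.sqrt (max 0 (νAlow - μAhigh ^ 2) * max 0 (νBlow - μBhigh ^ 2))
          let denHigh :=
            Real.sqrt (max 0 (νAhigh - μAlow ^ 2) * max 0 (νBhigh - μBlow ^ 2))
          let ρlow := if 0 ≤ numLow then numLow / denHigh else numLow / denLow
          let ρhigh := if 0 ≤ numHigh then numHigh / denLow else numHigh / denHigh
          0 < denLow → ρlow ≤ ρ ∧ ρ ≤ ρhigh)).card : ℝ)
      / ((Finset.powersetCard n (Finset.univ : Finset (Fin N))).card : ℝ)
    ≥ 1 - α := by
  intro μA μB νA νB νAB ρ t t'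
  have : Nonempty (Fin N) := ⟨⟨0, hn.trans_le hnN⟩⟩
  have hlog : 0 ≤ log (10 / α) := log_nonneg (by rw [le_div_iff₀ hα]; linarith)
  have hdev : ∀ (x : Fin N → ℝ) (D ε : ℝ), 0 < D → (∀ i, x i ∈ Set.Icc 0 D) → 0 ≤ ε →
      log (10 / α) * D ^ 2 / (2 * n) ≤ ε ^ 2 →
      (#{I ∈ (univ : Finset (Fin N)).powersetCard n |
        ¬ |(1 / (n : ℝ)) * ∑ i ∈ I, x i - (1 / (N : ℝ)) * ∑ i, x i| ≤ ε} : ℝ)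
        ≤ α / 5 * #((univ : Finset (Fin N)).powersetCard n) := by
    intro x D ε hD hx hε hεD
    have h2δ : 2 / (α / 5) = 10 / α := by field_simp; norm_num
    simpa only [Fintype.card_fin] using card_filter_abs_sampleMean_sub_mean_gt_le_mul_card hn x
      hD hx (by positivity) hε (by rwa [h2δ, sub_zero])
  have hP : (0 : ℝ) < #((univ : Finset (Fin N)).powersetCard n) := by
    rw [card_powersetCard, card_univ, Fintype.card_fin]; exact_mod_cast Nat.choose_pos hnN
  rw [ge_iff_le, le_div_iff₀ hP]
  refine le_trans (le_of_eq ?_) (one_sub_mul_card_le_card_filter (δ := α / 5)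
    (q := fun (k : Fin 5) I => |(1 / (n : ℝ)) * ∑ i ∈ I, ![A, B, A ^ 2, B ^ 2, A * B] k i
      - (1 / (N : ℝ)) * ∑ i, ![A, B, A ^ 2, B ^ 2, A * B] k i| ≤ ![t, t, t', t', t'] k) ?_ ?_)
  · rw [Fintype.card_fin]; ring
  · have hmul {x y : ℝ} (hx : x ∈ Set.Icc 0 C) (hy : y ∈ Set.Icc 0 C) : x * y ∈ Set.Icc 0 (C ^ 2) :=
      ⟨mul_nonneg hx.1 hy.1, sq C ▸ mul_le_mul hx.2 hy.2 hy.1 hC.le⟩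
    have ht : log (10 / α) * C ^ 2 / (2 * n) ≤ t ^ 2 := by rw [sq_sqrt (by positivity)]
    have ht' : log (10 / α) * (C ^ 2) ^ 2 / (2 * n) ≤ t' ^ 2 :=
      le_of_eq (by rw [sq_sqrt (by positivity)]; ring)
    intro k
    fin_cases k
    · exact hdev A C t hC (fun i => hA i) (sqrt_nonneg _) ht
    · exact hdev B C t hC (fun i => hB i) (sqrt_nonneg _) ht
    · exact hdev (A ^ 2) _ t' (by positivity)
        (fun i => by simpa only [Pi.pow_apply, sq] using hmul (hA i) (hA i)) (sqrt_nonneg _)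
        ht'
    · exact hdev (B ^ 2) _ t' (by positivity)
        (fun i => by simpa only [Pi.pow_apply, sq] using hmul (hB i) (hB i)) (sqrt_nonneg _)
        ht'
    · exact hdev _ _ t' (by positivity) (fun i => hmul (hA i) (hB i)) (sqrt_nonneg _) ht'
  · intro I _ h
    have hμA : 0 ≤ μA := mul_nonneg (by positivity) (sum_nonneg fun i _ => (hA i).1)
    have hμB : 0 ≤ μB := mul_nonneg (by positivity) (sum_nonneg fun i _ => (hB i).1)
    have hIcc := fun k => Set.mem_Icc_iff_abs_le.1 (h k)
    exact correlation_sandwich ⟨max_le hμA (hIcc 0).1, (hIcc 0).2⟩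
      ⟨max_le hμB (hIcc 1).1, (hIcc 1).2⟩ (hIcc 2) (hIcc 3) (hIcc 4) (le_max_left _ _)
      (le_max_left _ _) hvarA hvarB
end
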